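/- arXiv:math/0606726 — 2 statements merged into one kernel-verified Lean document; each statement's English description precedes it below -/
import Mathlib

section
/- Let σ be a permutation of X = {x_1 < ... < x_n} and T = φ(σ) the associated triangulation; for each i, let t_i be the third vertex of the unique face of T containing the edge {x_i, x_{i+1}}. Then x_i appears to the left of x_{i+1} in σ if and only if t_i < x_i. -/
open scoped Classical

/-- `d` is a diagonal of the convex `(n+2)`-gon with vertices `0,…,n+1`
(in clockwise increasing order): it joins two nonadjacent vertices. -/
def IsDiagonal (n : ℕ) (d : ℕ × ℕ) : Prop :=
  d.1 < d.2 ∧ d.2 ≤ n + 1 ∧ d.2 ≠ d.1 + 1 ∧ ¬(d.1 = 0 ∧ d.2 = n + 1)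

/-- Two diagonals of a convex polygon cross. -/
def Crosses (d e : ℕ × ℕ) : Prop :=
  (d.1 < e.1 ∧ e.1 < d.2 ∧ d.2 < e.2) ∨ (e.1 < d.1 ∧ d.1 < e.2 ∧ e.2 < d.2)

/-- A triangulation of the convex `(n+2)`-gon: `n-1` pairwise noncrossing diagonals. -/
def IsTriangulation (n : ℕ) (D : Finset (ℕ × ℕ)) : Prop :=
  (∀ d ∈ D, IsDiagonal n d) ∧ (∀ d ∈ D, ∀ e ∈ D, ¬ Crosses d e) ∧ D.card = n - 1

/-- `{a,b}` (with `a<b`) is an edge of the triangulation `D`: a polygon side or a diagonal. -/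
def IsEdge (n : ℕ) (D : Finset (ℕ × ℕ)) (a b : ℕ) : Prop :=
  a < b ∧ b ≤ n + 1 ∧ (b = a + 1 ∨ (a = 0 ∧ b = n + 1) ∨ (a, b) ∈ D)

/-- `{a,b,c}` (with `a<b<c`) is a (triangular) face of the triangulation `D`. -/
def IsFace (n : ℕ) (D : Finset (ℕ × ℕ)) (a b c : ℕ) : Prop :=
  a < b ∧ b < c ∧ IsEdge n D a b ∧ IsEdge n D b c ∧ IsEdge n D a c

/-- An ear of a triangulation: a vertex incident to no diagonal. -/
def IsEar (n : ℕ) (D : Finset (ℕ × ℕ)) (v : ℕ) : Prop :=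
  v ≤ n + 1 ∧ ∀ d ∈ D, d.1 ≠ v ∧ d.2 ≠ v

/-- Degree of a vertex: number of edges (polygon sides and diagonals) incident to it. -/
noncomputable def degreeOf (n : ℕ) (D : Finset (ℕ × ℕ)) (v : ℕ) : ℕ :=
  ((Finset.range (n + 2)).filter (fun w => w ≠ v ∧ IsEdge n D (min v w) (max v w))).card

/-- The set of faces of a triangulation, as increasing triples. -/
noncomputable def facesSet (n : ℕ) (D : Finset (ℕ × ℕ)) : Finset (ℕ × ℕ × ℕ) :=
  (Finset.range (n + 2) ×ˢ Finset.range (n + 2) ×ˢ Finset.range (n + 2)).filter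
    (fun t => IsFace n D t.1 t.2.1 t.2.2)

/-- Predecessor of `v` in the vertex set `Y`. -/
def predIn (Y : Finset ℕ) (v : ℕ) : ℕ := WithBot.unbotD 0 (Y.filter (· < v)).max
/-- Successor of `v` in the vertex set `Y`. -/
def succIn (Y : Finset ℕ) (v : ℕ) : ℕ := WithTop.untopD 0 (Y.filter (v < ·)).min

/-- The iterative neighbor-joining construction: for each successive letter,
join its two current neighbors by a diagonal and delete the letter's vertex. -/
def phiAux : List ℕ → Finset ℕ → Finset (ℕ × ℕ)
  | [], _ => ∅
  | [_], _ => ∅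
  | v :: rest, Y => insert (predIn Y v, succIn Y v) (phiAux rest (Y.erase v))

/-- The map `φ` from permutations (standard words, letters `1,…,n`) to
triangulations of the `(n+2)`-gon with vertices `0,…,n+1`. -/
def phiT (n : ℕ) (l : List ℕ) : Finset (ℕ × ℕ) := phiAux l (Finset.range (n + 2))

/-- `t` is the third vertex of a face of `D` containing the polygon side `{i, i+1}`. -/
def FaceOnEdge (n : ℕ) (D : Finset (ℕ × ℕ)) (i t : ℕ) : Prop :=
  (t < i ∧ IsFace n D t i (i + 1)) ∨ (i + 1 < t ∧ IsFace n D i (i + 1) t)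

/-- `D` and `D'` differ by one diagonal flip, in the quadrilateral `a<b<c<d`. -/
def FlipAdj (n : ℕ) (D D' : Finset (ℕ × ℕ)) : Prop :=
  ∃ a b c d : ℕ, a < b ∧ b < c ∧ c < d ∧
    ((IsFace n D a b d ∧ IsFace n D b c d ∧ D' = insert (a, c) (D.erase (b, d))) ∨
     (IsFace n D a b c ∧ IsFace n D a c d ∧ D' = insert (b, d) (D.erase (a, c))))

/-- Sylvester adjacency: `u x z u' y u'' ~ u z x u' y u''` with `x ≤ y < z`. -/
def SylvAdj (w1 w2 : List ℕ) : Prop :=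
  ∃ (u u' u'' : List ℕ) (x y z : ℕ), x ≤ y ∧ y < z ∧
    w1 = u ++ x :: z :: (u' ++ y :: u'') ∧ w2 = u ++ z :: x :: (u' ++ y :: u'')

/-- Sylvester congruence: the equivalence relation generated by sylvester adjacency. -/
def SylvCong : List ℕ → List ℕ → Prop := Relation.EqvGen SylvAdj

/-- Standardization of a word: replace the occurrences of the smallest letter,
left to right, by `1, 2, …`, then continue with the next letter, etc. -/
def stdW (w : List ℕ) : List ℕ :=
  (List.range w.length).map (fun i =>
    (((List.range w.length).filter (fun j =>
      w.getD j 0 < w.getD i 0 ∨ (w.getD j 0 = w.getD i 0 ∧ j < i))).length) + 1)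

/-- Partial sums of an evaluation `μ`. -/
def Msum (μ : ℕ → ℕ) (s : ℕ) : ℕ := ∑ t ∈ Finset.range s, μ t

/-- The color (block index) of the vertex `i` for the increasing coloring `ε_μ`. -/
noncomputable def colOf (μ : ℕ → ℕ) (p i : ℕ) : ℕ :=
  ((Finset.range p).filter (fun s => Msum μ (s + 1) < i)).card

/-- `D`, colored by the increasing coloring `ε_μ`, is a simple colored triangulation. -/
def SimpleFor (n p : ℕ) (μ : ℕ → ℕ) (D : Finset (ℕ × ℕ)) : Prop :=
  IsTriangulation n D ∧
  (∀ d ∈ D, 1 ≤ d.1 → d.2 ≤ n → colOf μ p d.1 ≠ colOf μ p d.2) ∧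
  (∀ i t, 1 ≤ i → i + 1 ≤ n → colOf μ p i = colOf μ p (i + 1) →
    FaceOnEdge n D i t → t < i)

/-- Switched flip: a diagonal flip (preserving vertex colors) whose two adjacent
faces (with middle vertices `b` and `c`) have different colors. -/
def SwFlipAdj (n p : ℕ) (μ : ℕ → ℕ) (D D' : Finset (ℕ × ℕ)) : Prop :=
  ∃ a b c d : ℕ, a < b ∧ b < c ∧ c < d ∧ colOf μ p b ≠ colOf μ p c ∧
    ((IsFace n D a b d ∧ IsFace n D b c d ∧ D' = insert (a, c) (D.erase (b, d))) ∨
     (IsFace n D a b c ∧ IsFace n D a c d ∧ D' = insert (b, d) (D.erase (a, c))))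

/-! When `i` precedes `i + 1` in `l`, the right neighbour of `i` at the moment it is deleted is
still `i + 1`, so `φ(l)` contains a diagonal `(p, i + 1)` with `p < i`. It would cross any diagonal
`(i, t)` with `t > i + 1`, so the face on the side `{i, i + 1}` has its third vertex below `i`.
Symmetrically, if `i + 1` comes first it creates a diagonal `(i, s)` with `s > i + 1`, which
rules out a third vertex `t < i` (the side `(t, i + 1)` would cross it). -/

section Neighbours

variable {Y : Finset ℕ} {v y : ℕ}

lemma predIn_eq_max' (h : (Y.filter (· < v)).Nonempty) :
    predIn Y v = (Y.filter (· < v)).max' h := by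
  simp [predIn, ← Finset.coe_max' h, WithBot.unbotD_coe]

lemma succIn_eq_min' (h : (Y.filter (v < ·)).Nonempty) :
    succIn Y v = (Y.filter (v < ·)).min' h := by
  rw [succIn, ← Finset.coe_min' h, WithTop.untopD_coe]

lemma predIn_mem_filter (h : ∃ a ∈ Y, a < v) : predIn Y v ∈ Y.filter (· < v) := by
  obtain ⟨a, ha, hav⟩ := h
  have hS : (Y.filter (· < v)).Nonempty := ⟨a, Finset.mem_filter.2 ⟨ha, hav⟩⟩
  exact predIn_eq_max' hS ▸ Finset.max'_mem _ hS

lemma succIn_mem_filter (h : ∃ a ∈ Y, v < a) : succIn Y v ∈ Y.filter (v < ·) := by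
  obtain ⟨a, ha, hva⟩ := h
  have hS : (Y.filter (v < ·)).Nonempty := ⟨a, Finset.mem_filter.2 ⟨ha, hva⟩⟩
  exact succIn_eq_min' hS ▸ Finset.min'_mem _ hS

lemma le_predIn (hy : y ∈ Y) (hyv : y < v) : y ≤ predIn Y v :=
  have hy' : y ∈ Y.filter (· < v) := Finset.mem_filter.2 ⟨hy, hyv⟩
  predIn_eq_max' ⟨y, hy'⟩ ▸ Finset.le_max' _ y hy'

lemma succIn_le (hy : y ∈ Y) (hvy : v < y) : succIn Y v ≤ y :=
  have hy' : y ∈ Y.filter (v < ·) := Finset.mem_filter.2 ⟨hy, hvy⟩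
  succIn_eq_min' ⟨y, hy'⟩ ▸ Finset.min'_le _ y hy'

lemma eq_of_predIn_lt_of_lt_succIn (hy : y ∈ Y) (h₁ : predIn Y v < y) (h₂ : y < succIn Y v) :
    y = v := by
  rcases lt_trichotomy y v with h | h | h
  · exact absurd (le_predIn hy h) (not_le.2 h₁)
  · exact h
  · exact absurd (succIn_le hy h) (not_le.2 h₂)

end Neighbours

lemma crosses_comm {d e : ℕ × ℕ} : Crosses d e ↔ Crosses e d := by
  unfold Crosses
  tauto

lemma not_crosses_of_notMem_Ioo {d e : ℕ × ℕ} (h₁ : e.1 ∉ Set.Ioo d.1 d.2)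
    (h₂ : e.2 ∉ Set.Ioo d.1 d.2) : ¬ Crosses d e := by
  simp only [Set.mem_Ioo, not_and, not_lt] at h₁ h₂
  unfold Crosses
  omega

def Noncrossing (D : Finset (ℕ × ℕ)) : Prop :=
  ∀ d ∈ D, ∀ e ∈ D, ¬ Crosses d e

/-- Keeps `predIn` and `succIn` away from their junk default `0`: each letter of `l` has the
frame vertex `lo` below it and `hi` above it in the current vertex set. -/
structure Framed (lo hi : ℕ) (l : List ℕ) (Y : Finset ℕ) : Prop where
  lo_mem : lo ∈ Y
  hi_mem : hi ∈ Y
  nodup : l.Nodup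
  mem : ∀ v ∈ l, v ∈ Y ∧ lo < v ∧ v < hi

namespace Framed

variable {lo hi v : ℕ} {l : List ℕ} {Y : Finset ℕ}

lemma tail (hF : Framed lo hi (v :: l) Y) : Framed lo hi l (Y.erase v) := by
  have hv := hF.mem v List.mem_cons_self
  refine ⟨Finset.mem_erase.2 ⟨by omega, hF.lo_mem⟩, Finset.mem_erase.2 ⟨by omega, hF.hi_mem⟩,
    (List.nodup_cons.1 hF.nodup).2, fun w hw => ?_⟩
  have hw' := hF.mem w (List.mem_cons_of_mem _ hw)
  refine ⟨Finset.mem_erase.2 ⟨?_, hw'.1⟩, hw'.2⟩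
  rintro rfl
  exact (List.nodup_cons.1 hF.nodup).1 hw

lemma predIn_mem (hF : Framed lo hi (v :: l) Y) : predIn Y v ∈ Y.filter (· < v) :=
  predIn_mem_filter ⟨lo, hF.lo_mem, (hF.mem v List.mem_cons_self).2.1⟩

lemma succIn_mem (hF : Framed lo hi (v :: l) Y) : succIn Y v ∈ Y.filter (v < ·) :=
  succIn_mem_filter ⟨hi, hF.hi_mem, (hF.mem v List.mem_cons_self).2.2⟩

end Framed

lemma phiAux_cons_of_ne_nil (v : ℕ) {l : List ℕ} (hl : l ≠ []) (Y : Finset ℕ) :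
    phiAux (v :: l) Y = insert (predIn Y v, succIn Y v) (phiAux l (Y.erase v)) := by
  cases l with
  | nil => exact absurd rfl hl
  | cons _ _ => rfl

lemma Framed.mem_of_mem_phiAux {lo hi : ℕ} {l : List ℕ} {Y : Finset ℕ}
    (hF : Framed lo hi l Y) {d : ℕ × ℕ} (hd : d ∈ phiAux l Y) : d.1 ∈ Y ∧ d.2 ∈ Y := by
  induction l generalizing Y with
  | nil => simp [phiAux] at hd
  | cons v rest ih =>
    rcases eq_or_ne rest [] with rfl | hrest
    · simp [phiAux] at hd
    rw [phiAux_cons_of_ne_nil v hrest] at hd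
    rcases Finset.mem_insert.1 hd with rfl | hd
    · exact ⟨(Finset.mem_filter.1 hF.predIn_mem).1, (Finset.mem_filter.1 hF.succIn_mem).1⟩
    · obtain ⟨h₁, h₂⟩ := ih hF.tail hd
      exact ⟨Finset.mem_of_mem_erase h₁, Finset.mem_of_mem_erase h₂⟩

/-- A new diagonal `(predIn Y v, succIn Y v)` cannot cross an older one: an endpoint of the
older diagonal strictly between them would be a vertex of `Y.erase v` between `v`'s neighbours. -/
lemma Framed.noncrossing_phiAux {lo hi : ℕ} {l : List ℕ} {Y : Finset ℕ}
    (hF : Framed lo hi l Y) : Noncrossing (phiAux l Y) := by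
  induction l generalizing Y with
  | nil => simp [Noncrossing, phiAux]
  | cons v rest ih =>
    rcases eq_or_ne rest [] with rfl | hrest
    · simp [Noncrossing, phiAux]
    have hnew : ∀ e ∈ phiAux rest (Y.erase v), ¬ Crosses (predIn Y v, succIn Y v) e := by
      intro e he
      have hmem := hF.tail.mem_of_mem_phiAux he
      have hout : ∀ y ∈ Y.erase v, y ∉ Set.Ioo (predIn Y v) (succIn Y v) := fun y hy hIoo =>
        (Finset.mem_erase.1 hy).1 (eq_of_predIn_lt_of_lt_succIn
          (Finset.mem_of_mem_erase hy) hIoo.1 hIoo.2)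
      exact not_crosses_of_notMem_Ioo (hout _ hmem.1) (hout _ hmem.2)
    rw [Noncrossing, phiAux_cons_of_ne_nil v hrest]
    intro d hd e he
    rcases Finset.mem_insert.1 hd with rfl | hd <;> rcases Finset.mem_insert.1 he with rfl | he
    · simp [Crosses]
    · exact hnew e he
    · exact fun h => hnew d hd (crosses_comm.1 h)
    · exact ih hF.tail d hd e he

lemma phiAux_append_cons_mem (u : List ℕ) (Y : Finset ℕ) (v : ℕ) {r : List ℕ} (hr : r ≠ []) :
    (predIn (Y \ u.toFinset) v, succIn (Y \ u.toFinset) v) ∈ phiAux (u ++ v :: r) Y := by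
  induction u generalizing Y with
  | nil =>
    rw [List.nil_append, phiAux_cons_of_ne_nil v hr]
    simp
  | cons a u ih =>
    rw [List.cons_append, phiAux_cons_of_ne_nil a (by simp), List.toFinset_cons,
      Finset.sdiff_insert, ← Finset.erase_sdiff_comm]
    exact Finset.mem_insert_of_mem (ih (Y.erase a))

/-- If `a` precedes `b` in `l`, then `b` is still a vertex when `a` is deleted, so the diagonal
created at that moment spans `a` and does not reach past `b`. -/
lemma Framed.exists_mem_phiAux_of_idxOf_lt {lo hi a b : ℕ} {l : List ℕ} {Y : Finset ℕ}
    (hF : Framed lo hi l Y) (ha : a ∈ l) (hb : b ∈ l) (hab : l.idxOf a < l.idxOf b) :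
    ∃ d ∈ phiAux l Y, d.1 < a ∧ a < d.2 ∧ (b < a → b ≤ d.1) ∧ (a < b → d.2 ≤ b) := by
  obtain ⟨u, r, rfl⟩ := List.append_of_mem ha
  have hau : a ∉ u := fun h => List.disjoint_of_nodup_append hF.nodup h List.mem_cons_self
  have hbu : b ∉ u := by
    intro h
    rw [List.idxOf_append_of_mem h, List.idxOf_append_of_notMem hau] at hab
    exact absurd (List.idxOf_lt_length_iff.2 h) (by simp at hab; omega)
  have hr : r ≠ [] := by
    rintro rfl
    rcases List.mem_append.1 hb with h | h
    · exact hbu h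
    · rw [List.mem_singleton.1 h] at hab
      exact lt_irrefl _ hab
  set Z := Y \ u.toFinset
  have hZ : Framed lo hi (a :: r) Z := by
    have hlo : lo ∉ u := fun h => by have := hF.mem lo (List.mem_append_left _ h); omega
    have hhi : hi ∉ u := fun h => by have := hF.mem hi (List.mem_append_left _ h); omega
    refine ⟨by simp [Z, hF.lo_mem, hlo], by simp [Z, hF.hi_mem, hhi],
      (List.nodup_append.1 hF.nodup).2.1, fun w hw => ?_⟩
    have hwu : w ∉ u := fun h => List.disjoint_of_nodup_append hF.nodup h hw
    have hw' := hF.mem w (List.mem_append_right _ hw)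
    exact ⟨by simp [Z, hw'.1, hwu], hw'.2⟩
  have hbZ : b ∈ Z := by simp [Z, (hF.mem b hb).1, hbu]
  have hp := Finset.mem_filter.1 hZ.predIn_mem
  have hs := Finset.mem_filter.1 hZ.succIn_mem
  exact ⟨_, phiAux_append_cons_mem u Y a hr, hp.2, hs.2, le_predIn hbZ, succIn_le hbZ⟩

section FaceOnEdge

variable {n : ℕ} {D : Finset (ℕ × ℕ)} {i t : ℕ}

lemma FaceOnEdge.lt_of_mem_of_lt {p : ℕ} (hD : Noncrossing D) (ht : FaceOnEdge n D i t)
    (hp : (p, i + 1) ∈ D) (hpi : p < i) : t < i := by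
  rcases ht with ⟨hti, -⟩ | ⟨hit, -, -, -, -, -, -, hedge⟩
  · exact hti
  · rcases hedge with h | h | h
    · omega
    · omega
    · exact absurd (Or.inl ⟨hpi, lt_add_one i, hit⟩) (hD _ hp _ h)

lemma FaceOnEdge.succ_lt_of_mem_of_succ_lt {s : ℕ} (hD : Noncrossing D)
    (ht : FaceOnEdge n D i t) (hs : (i, s) ∈ D) (hsi : i + 1 < s) (hin : i + 1 ≤ n) :
    i + 1 < t := by
  rcases ht with ⟨hti, -, -, -, -, -, -, hedge⟩ | ⟨hit, -⟩
  · rcases hedge with h | h | h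
    · omega
    · omega
    · exact absurd (Or.inl ⟨hti, lt_add_one i, hsi⟩) (hD _ h _ hs)
  · exact hit

end FaceOnEdge

lemma framed_of_perm {n : ℕ} {l : List ℕ} (hl : l.Perm ((List.range n).map (· + 1))) :
    Framed 0 (n + 1) l (Finset.range (n + 2)) := by
  refine ⟨by simp, by simp, hl.nodup_iff.2 ((List.nodup_range).map (fun _ _ => by omega)),
    fun v hv => ?_⟩
  obtain ⟨j, hj, rfl⟩ := List.mem_map.1 (hl.mem_iff.1 hv)
  simp only [List.mem_range] at hj
  simp only [Finset.mem_range]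
  omega

/-- Let `T = φ(σ)` and let `t_i` be the third vertex of the unique face of `T`
containing the edge `{x_i, x_{i+1}}`. Then `x_i` appears to the left of `x_{i+1}`
in `σ` if and only if `t_i < x_i`. -/
theorem stmt5 (n : ℕ) (l : List ℕ) (hl : l.Perm ((List.range n).map (· + 1)))
    (i : ℕ) (hi1 : 1 ≤ i) (hi2 : i + 1 ≤ n) (t : ℕ)
    (ht : FaceOnEdge n (phiT n l) i t) :
    l.idxOf i < l.idxOf (i + 1) ↔ t < i := by
  have hF := framed_of_perm hl
  have hD : Noncrossing (phiT n l) := hF.noncrossing_phiAux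
  have hmem_l : ∀ v, 1 ≤ v → v ≤ n → v ∈ l := fun v h₁ h₂ =>
    hl.mem_iff.2 (List.mem_map.2 ⟨v - 1, List.mem_range.2 (by omega), by omega⟩)
  have hi : i ∈ l := hmem_l i hi1 (by omega)
  have hi' : i + 1 ∈ l := hmem_l (i + 1) (by omega) hi2
  rcases lt_or_gt_of_ne ((List.idxOf_inj hi).not.2 (by omega : i ≠ i + 1)) with hlt | hgt
  · obtain ⟨⟨p, s⟩, hd, hpi, his, -, hs⟩ := hF.exists_mem_phiAux_of_idxOf_lt hi hi' hlt
    obtain rfl : s = i + 1 := le_antisymm (hs (lt_add_one i)) his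
    exact iff_of_true hlt (ht.lt_of_mem_of_lt hD hd hpi)
  · obtain ⟨⟨p, s⟩, hd, hpi, his, hp, -⟩ := hF.exists_mem_phiAux_of_idxOf_lt hi' hi hgt
    obtain rfl : p = i := le_antisymm (Nat.le_of_lt_succ hpi) (hp (lt_add_one i))
    have hit := ht.succ_lt_of_mem_of_succ_lt hD hd his hi2
    exact iff_of_false (by omega) (by omega)
end

section
/- If two words w_1, w_2 on a totally ordered alphabet have the same evaluation (same multiset of letters, in the same positions-count sense) and std(w_1) is sylvester congruent to std(w_2), then w_1 is sylvester congruent to w_2. -/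
open scoped Classical

/-! Binary search tree insertion, reading a word from right to left, is invariant under sylvester
congruence, and every word is congruent to the postorder reading of its tree; hence two words are
congruent as soon as their trees agree. The tree of `w` is the tree of `std w` relabelled by
destandardization, which depends only on the evaluation of `w`: insertion only compares the new
letter with letters to its right, and standardization preserves exactly these comparisons. -/

namespace BinaryTree

variable {α β : Type*}

def labels : BinaryTree α → Multiset α
  | nil => 0
  | node a l r => a ::ₘ (labels l + labels r)

def postorder : BinaryTree α → List α
  | nil => []
  | node a l r => postorder l ++ postorder r ++ [a]

section LinearOrder

variable [LinearOrder α]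

def bstInsert (a : α) : BinaryTree α → BinaryTree α
  | nil => node a nil nil
  | node c l r => if a ≤ c then node c (bstInsert a l) r else node c l (bstInsert a r)

def IsBST : BinaryTree α → Prop
  | nil => True
  | node c l r => (∀ a ∈ labels l, a ≤ c) ∧ (∀ a ∈ labels r, c < a) ∧ IsBST l ∧ IsBST r

theorem labels_bstInsert (a : α) (t : BinaryTree α) :
    labels (bstInsert a t) = a ::ₘ labels t := by
  induction t with
  | nil => rfl
  | node c l r ihl ihr =>
    unfold bstInsert
    split_ifs
    · simp only [labels, ihl, Multiset.cons_add, Multiset.cons_swap]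
    · simp only [labels, ihr, Multiset.add_cons, Multiset.cons_swap]

theorem IsBST.bstInsert (a : α) {t : BinaryTree α} (ht : IsBST t) : IsBST (bstInsert a t) := by
  induction t with
  | nil => simp [BinaryTree.bstInsert, IsBST, labels]
  | node c l r ihl ihr =>
    obtain ⟨hl, hr, bl, br⟩ := ht
    unfold BinaryTree.bstInsert
    split_ifs with hac
    · refine ⟨?_, hr, ihl bl, br⟩
      simpa [labels_bstInsert, hac] using hl
    · refine ⟨hl, ?_, bl, ihr br⟩
      simpa [labels_bstInsert, not_le.mp hac] using hr

/-- The search paths of `x` and `z` split at `y` at the latest. -/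
theorem bstInsert_comm {x y z : α} (hxy : x ≤ y) (hyz : y < z) {t : BinaryTree α} (ht : IsBST t)
    (hy : y ∈ labels t) : bstInsert x (bstInsert z t) = bstInsert z (bstInsert x t) := by
  induction t with
  | nil => simp [labels] at hy
  | node c l r ihl ihr =>
    obtain ⟨hl, hr, bl, br⟩ := ht
    simp only [labels, Multiset.mem_cons, Multiset.mem_add] at hy
    by_cases hzc : z ≤ c
    · have hyl : y ∈ labels l := by
        rcases hy with rfl | hy | hy
        · exact absurd hzc (not_le.mpr hyz)
        · exact hy
        · exact absurd (hr y hy) (not_lt.mpr (hyz.le.trans hzc))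
      have hxc : x ≤ c := hxy.trans (hyz.le.trans hzc)
      simp only [bstInsert, hzc, hxc, if_true, ihl bl hyl]
    by_cases hxc : x ≤ c
    · simp only [bstInsert, hzc, hxc, if_true, if_false]
    · have hyr : y ∈ labels r := by
        rcases hy with rfl | hy | hy
        · exact absurd hxy hxc
        · exact absurd (hxy.trans (hl y hy)) hxc
        · exact hy
      simp only [bstInsert, hzc, hxc, if_false, ihr br hyr]

theorem map_bstInsert [LinearOrder β] (f : α → β) (a : α) {t : BinaryTree α}
    (h : ∀ c ∈ labels t, f a ≤ f c ↔ a ≤ c) : (bstInsert a t).map f = bstInsert (f a) (t.map f) := by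
  induction t with
  | nil => rfl
  | node c l r ihl ihr =>
    simp only [labels, Multiset.mem_cons, Multiset.mem_add] at h
    have hc := h c (Or.inl rfl)
    unfold bstInsert
    by_cases hac : a ≤ c
    · simp [map, hac, hc.mpr hac, ihl fun d hd => h d (Or.inr (Or.inl hd))]
    · simp [map, hac, mt hc.mp hac, ihr fun d hd => h d (Or.inr (Or.inr hd))]

end LinearOrder

end BinaryTree

open BinaryTree

namespace List

variable {α β : Type*} [LinearOrder α]

def toBST (w : List α) : BinaryTree α := w.foldr bstInsert .nil

@[simp]
theorem toBST_cons (a : α) (w : List α) : toBST (a :: w) = bstInsert a (toBST w) := rfl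

theorem toBST_append (u v : List α) : toBST (u ++ v) = u.foldr bstInsert (toBST v) :=
  foldr_append

theorem labels_toBST (w : List α) : labels (toBST w) = w := by
  induction w with
  | nil => rfl
  | cons a w ih => rw [toBST_cons, labels_bstInsert, ih, Multiset.cons_coe]

theorem isBST_toBST (w : List α) : IsBST (toBST w) := by
  induction w with
  | nil => trivial
  | cons a w ih => exact ih.bstInsert a

theorem toBST_append_singleton (w : List α) (c : α) :
    toBST (w ++ [c]) = .node c (toBST (w.filter (· ≤ c))) (toBST (w.filter (c < ·))) := by
  induction w with
  | nil => rfl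
  | cons a w ih =>
    by_cases hac : a ≤ c
    · simp [ih, bstInsert, hac, not_lt.mpr hac]
    · simp [ih, bstInsert, hac, not_le.mp hac]

theorem toBST_map [LinearOrder β] (f : α → β) {w : List α}
    (hw : w.Pairwise fun a c => f a ≤ f c ↔ a ≤ c) : toBST (w.map f) = (toBST w).map f := by
  induction w with
  | nil => rfl
  | cons a w ih =>
    rw [pairwise_cons] at hw
    rw [map_cons, toBST_cons, toBST_cons, ih hw.2, map_bstInsert]
    simpa [labels_toBST] using hw.1

end List

open List

theorem SylvCong.symm {u v : List ℕ} (h : SylvCong u v) : SylvCong v u :=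
  Relation.EqvGen.symm _ _ h

theorem SylvCong.trans {u v w : List ℕ} (huv : SylvCong u v) (hvw : SylvCong v w) :
    SylvCong u w :=
  Relation.EqvGen.trans _ _ _ huv hvw

theorem SylvAdj.sylvCong {u v : List ℕ} (h : SylvAdj u v) : SylvCong u v :=
  Relation.EqvGen.rel _ _ h

theorem SylvAdj.append_append {u v : List ℕ} (h : SylvAdj u v) (s t : List ℕ) :
    SylvAdj (s ++ u ++ t) (s ++ v ++ t) := by
  obtain ⟨p, p', p'', x, y, z, hxy, hyz, rfl, rfl⟩ := h
  exact ⟨s ++ p, p', p'' ++ t, x, y, z, hxy, hyz, by simp, by simp⟩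

theorem SylvCong.append_append {u v : List ℕ} (h : SylvCong u v) (s t : List ℕ) :
    SylvCong (s ++ u ++ t) (s ++ v ++ t) := by
  induction h with
  | rel _ _ h => exact (h.append_append s t).sylvCong
  | refl => exact .refl _
  | symm _ _ _ ih => exact ih.symm
  | trans _ _ _ _ _ ih₁ ih₂ => exact ih₁.trans ih₂

theorem SylvAdj.toBST_eq {u v : List ℕ} (h : SylvAdj u v) : u.toBST = v.toBST := by
  obtain ⟨p, p', p'', x, y, z, hxy, hyz, rfl, rfl⟩ := h
  rw [toBST_append, toBST_append, toBST_cons, toBST_cons, toBST_cons, toBST_cons,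
    bstInsert_comm hxy hyz (isBST_toBST _) (by simp [labels_toBST])]

theorem SylvCong.toBST_eq {u v : List ℕ} (h : SylvCong u v) : u.toBST = v.toBST := by
  induction h with
  | rel _ _ h => exact h.toBST_eq
  | refl => rfl
  | symm _ _ _ ih => exact ih.symm
  | trans _ _ _ _ _ ih₁ ih₂ => exact ih₁.trans ih₂

/-- Each swap `e a ~ a e` is witnessed by the letter `c` on the right. -/
theorem sylvCong_cons_append {a c : ℕ} (hca : c < a) {A : List ℕ} (hA : ∀ e ∈ A, e ≤ c)
    (s t : List ℕ) : SylvCong (a :: A ++ s ++ c :: t) (A ++ a :: s ++ c :: t) := by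
  induction A with
  | nil => exact .refl _
  | cons e A ih =>
    have hswap : SylvAdj (e :: a :: (A ++ s ++ c :: t)) (a :: e :: (A ++ s ++ c :: t)) :=
      ⟨[], A ++ s, t, e, c, a, hA e mem_cons_self, hca, by simp, by simp⟩
    have hmove := (ih fun x hx => hA x (mem_cons_of_mem e hx)).append_append [e] []
    simp only [cons_append, nil_append, append_nil] at hmove ⊢
    exact hswap.sylvCong.symm.trans hmove

theorem sylvCong_append_singleton (w : List ℕ) (c : ℕ) :
    SylvCong (w ++ [c]) (w.filter (· ≤ c) ++ w.filter (c < ·) ++ [c]) := by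
  induction w with
  | nil => exact .refl _
  | cons a w ih =>
    have ih' := ih.append_append [a] []
    simp only [cons_append, nil_append, append_nil] at ih'
    by_cases hac : a ≤ c
    · simpa [hac, not_lt.mpr hac] using ih'
    · simp only [filter_cons, hac, not_le.mp hac, decide_true, decide_false, cons_append]
      exact ih'.trans (sylvCong_cons_append (not_le.mp hac) (by simp) _ [])

theorem sylvCong_postorder_toBST (w : List ℕ) : SylvCong w (postorder w.toBST) := by
  rcases eq_nil_or_concat' w with rfl | ⟨v, c, rfl⟩
  · exact .refl _
  · have hl := sylvCong_postorder_toBST (v.filter (· ≤ c))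
    have hr := sylvCong_postorder_toBST (v.filter (c < ·))
    rw [toBST_append_singleton, postorder]
    have hl' : SylvCong (v.filter (· ≤ c) ++ v.filter (c < ·) ++ [c])
        (postorder (v.filter (· ≤ c)).toBST ++ v.filter (c < ·) ++ [c]) := by
      simpa using hl.append_append [] (v.filter (c < ·) ++ [c])
    exact (sylvCong_append_singleton v c).trans (hl'.trans (hr.append_append _ [c]))
termination_by w.length
decreasing_by all_goals subst_vars; simpa using Nat.lt_succ_of_le (length_filter_le _ _)

namespace List

variable {α : Type*}

theorem countP_lt_countP {p q : α → Bool} {l : List α} (h : ∀ x ∈ l, p x → q x) {a : α}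
    (ha : a ∈ l) (hpa : ¬p a) (hqa : q a) : l.countP p < l.countP q := by
  obtain ⟨s, t, rfl⟩ := append_of_mem ha
  have hs := countP_mono_left fun x hx => h x (mem_append_left _ hx)
  have ht := countP_mono_left fun x hx => h x (mem_append_right s (mem_cons_of_mem a hx))
  simp only [countP_append, countP_cons, hpa, hqa, Bool.false_eq_true, if_true, if_false]
  omega

theorem map_getD_range (w : List α) (d : α) : (range w.length).map (w.getD · d) = w :=
  ext_getElem (by simp) fun i hi _ => by simp [getElem?_eq_getElem (by simpa using hi)]

end List

def stdRank (w : List ℕ) (i : ℕ) : ℕ :=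
  ((range w.length).filter fun j =>
    w.getD j 0 < w.getD i 0 ∨ (w.getD j 0 = w.getD i 0 ∧ j < i)).length

theorem stdW_eq_map_stdRank (w : List ℕ) :
    stdW w = (range w.length).map fun i => stdRank w i + 1 := rfl

theorem stdRank_lt_stdRank {w : List ℕ} {i j : ℕ} (hi : i < w.length)
    (hij : w.getD i 0 < w.getD j 0 ∨ (w.getD i 0 = w.getD j 0 ∧ i < j)) :
    stdRank w i < stdRank w j := by
  simp only [stdRank, ← countP_eq_length_filter]
  refine countP_lt_countP (fun k _ hk => ?_) (mem_range.mpr hi) (by simp) (by simpa using hij)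
  simp only [decide_eq_true_eq] at hk ⊢
  omega

/-- The `k`-th smallest letter of `w`, counting from `1`. -/
noncomputable def destdW (w : List ℕ) (k : ℕ) : ℕ :=
  sInf {v | k ≤ w.countP (· ≤ v)}

theorem List.Perm.destdW_eq {w₁ w₂ : List ℕ} (h : w₁.Perm w₂) : destdW w₁ = destdW w₂ := by
  funext k
  simp only [destdW, h.countP_eq]

theorem destdW_stdRank_add_one {w : List ℕ} {i : ℕ} (hi : i < w.length) :
    destdW w (stdRank w i + 1) = w.getD i 0 := by
  have hcount (v : ℕ) :
      w.countP (· ≤ v) = (range w.length).countP fun j => w.getD j 0 ≤ v := by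
    conv_lhs => rw [← map_getD_range w 0]
    rw [countP_map]
    rfl
  have hrank : stdRank w i = (range w.length).countP fun j =>
      w.getD j 0 < w.getD i 0 ∨ (w.getD j 0 = w.getD i 0 ∧ j < i) :=
    countP_eq_length_filter.symm
  have hmem : stdRank w i + 1 ≤ w.countP (· ≤ w.getD i 0) := by
    rw [hcount, hrank]
    refine countP_lt_countP (fun k _ hk => ?_) (mem_range.mpr hi) (by simp) (by simp)
    simp only [decide_eq_true_eq] at hk ⊢
    omega
  refine le_antisymm (Nat.sInf_le hmem) (le_csInf ⟨_, hmem⟩ fun v hv => ?_)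
  by_contra hlt
  have hle : w.countP (· ≤ v) ≤ stdRank w i := by
    rw [hcount, hrank]
    refine countP_mono_left fun k _ hk => ?_
    simp only [decide_eq_true_eq] at hk ⊢
    omega
  exact Nat.not_succ_le_self _ (hv.trans hle)

theorem map_destdW_stdW (w : List ℕ) : (stdW w).map (destdW w) = w := by
  conv_rhs => rw [← map_getD_range w 0]
  rw [stdW_eq_map_stdRank, map_map]
  exact map_congr_left fun i hi => destdW_stdRank_add_one (mem_range.mp hi)

theorem pairwise_destdW_stdW (w : List ℕ) :
    (stdW w).Pairwise fun a b => destdW w a ≤ destdW w b ↔ a ≤ b := by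
  rw [stdW_eq_map_stdRank, pairwise_map]
  refine pairwise_lt_range.imp_of_mem fun {i j} hi hj hij => ?_
  rw [mem_range] at hi hj
  rw [destdW_stdRank_add_one hi, destdW_stdRank_add_one hj]
  constructor
  · intro hw
    have := stdRank_lt_stdRank (j := j) hi (by omega)
    omega
  · intro hr
    by_contra hw
    have := stdRank_lt_stdRank hj (Or.inl (not_le.mp hw))
    omega

theorem toBST_eq_map_toBST_stdW (w : List ℕ) : w.toBST = (stdW w).toBST.map (destdW w) := by
  conv_lhs => rw [← map_destdW_stdW w]
  exact toBST_map _ (pairwise_destdW_stdW w)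

/-- If two words have the same evaluation and their standardizations are sylvester
congruent, then the words themselves are sylvester congruent. -/
theorem stmt13 (w1 w2 : List ℕ) (hev : ∀ c : ℕ, w1.count c = w2.count c)
    (h : SylvCong (stdW w1) (stdW w2)) : SylvCong w1 w2 := by
  have hbst : w1.toBST = w2.toBST := by
    rw [toBST_eq_map_toBST_stdW w1, toBST_eq_map_toBST_stdW w2, h.toBST_eq,
      (perm_iff_count.mpr hev).destdW_eq]
  exact (sylvCong_postorder_toBST w1).trans (hbst ▸ (sylvCong_postorder_toBST w2).symm)
end
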